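/- Let T be a tree on n vertices with diameter at least 3. Then the largest distance eigenvalue satisfies λ₁(D(T)) ≥ 2n − 2 − 4/n; in particular λ₁(D(T)) > 2n − 3. -/

import Mathlib

open Finset SimpleGraph

/-- The distance matrix of a simple graph on `Fin n`, as a real matrix: the
`(i,j)` entry is the graph distance `d_G(i,j)`. -/
noncomputable def distMatrix {n : ℕ} (G : SimpleGraph (Fin n)) :
    Matrix (Fin n) (Fin n) ℝ :=
  fun i j => (G.dist i j : ℝ)

/-- The eigenvalues of the distance matrix, listed in decreasing order. -/
noncomputable def distEigList {n : ℕ} (G : SimpleGraph (Fin n)) : List ℝ :=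
  if h : (distMatrix G).IsHermitian then
    (List.ofFn h.eigenvalues).insertionSort (· ≥ ·)
  else []

/-- `distEig G k` is the `k`-th largest distance eigenvalue `λ_k(D(G))` (`1`-indexed). -/
noncomputable def distEig {n : ℕ} (G : SimpleGraph (Fin n)) (k : ℕ) : ℝ :=
  (distEigList G).getD (k - 1) 0

/-- `S_k(D(G))`, the sum of the `k` largest distance eigenvalues. -/
noncomputable def distEigSum {n : ℕ} (G : SimpleGraph (Fin n)) (k : ℕ) : ℝ :=
  ((distEigList G).take k).sum

/-- `G` has independence number at most `s`: every set of pairwise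
nonadjacent vertices has at most `s` elements. -/
def IndepNumLE {V : Type*} (G : SimpleGraph V) (s : ℕ) : Prop :=
  ∀ S : Finset V, (∀ u ∈ S, ∀ v ∈ S, u ≠ v → ¬ G.Adj u v) → S.card ≤ s

/-!
The all-ones vector in the Rayleigh quotient gives `λ₁(D(T)) ≥ W / n`, where `W` is the sum of all
`n²` entries of `D(T)`. Every ordered pair of distinct vertices contributes at least `2`, except the
`2(n - 1)` ordered edges, which contribute `1`; so `W ≥ 2n(n - 1) - 2(n - 1) + N₃`, where `N₃` counts
the ordered pairs at distance at least `3`. If `a b c d` is a geodesic, every vertex other than `b`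
and `c` is at distance at least `3` from `a` or from `d` (in a tree a vertex has at most one neighbour
closer to a given vertex). So the rows of `a` and `d` contain `n - 2` such pairs between them and
every other row outside `{b, c}` at least one, whence `N₃ ≥ 2n - 6` and `W ≥ 2n² - 2n - 4`.
For `n ≥ 5` this already gives `λ₁ > 2n - 3`; for `n ≤ 4` the test vector `(3, 2, 2, 3)` on the
geodesic gives `λ₁ ≥ 67/13 > 5`.
-/

open Matrix

theorem Matrix.IsHermitian.dotProduct_mulVec_le {ι : Type*} [Fintype ι] [DecidableEq ι]
    {A : Matrix ι ι ℝ} (hA : A.IsHermitian) {μ : ℝ} (hμ : ∀ i, hA.eigenvalues i ≤ μ)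
    (x : ι → ℝ) : x ⬝ᵥ A *ᵥ x ≤ μ * (x ⬝ᵥ x) := by
  have hpsd : (algebraMap ℝ _ μ - A).PosSemidef := by
    refine posSemidef_iff_isHermitian_and_spectrum_nonneg.mpr ⟨?_, ?_⟩
    · rw [Algebra.algebraMap_eq_smul_one]
      exact (isHermitian_one.smul (.all μ)).sub hA
    · rw [← spectrum.singleton_sub_eq, hA.spectrum_real_eq_range_eigenvalues]
      rintro _ ⟨_, rfl, _, ⟨i, rfl⟩, rfl⟩
      simpa using hμ i
  have := hpsd.dotProduct_mulVec_nonneg x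
  simp only [Algebra.algebraMap_eq_smul_one, star_trivial, sub_mulVec, smul_mulVec, one_mulVec,
    dotProduct_sub, dotProduct_smul, smul_eq_mul] at this
  linarith

lemma List.Pairwise.le_getD_zero {l : List ℝ} (hl : l.Pairwise (· ≥ ·)) {x : ℝ} (hx : x ∈ l) :
    x ≤ l.getD 0 0 := by
  cases l with
  | nil => simp at hx
  | cons a t =>
    rcases List.mem_cons.mp hx with rfl | h
    · simp
    · exact List.rel_of_pairwise_cons hl h

namespace SimpleGraph

variable {V : Type*} {G : SimpleGraph V}

lemma exists_adj_adj_adj_dist_eq_three {u v : V} (huv : 3 ≤ G.dist u v) :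
    ∃ a b c d, G.Adj a b ∧ G.Adj b c ∧ G.Adj c d ∧ G.dist a d = 3 := by
  obtain ⟨p, hp⟩ := exists_walk_of_dist_ne_zero (by omega : G.dist u v ≠ 0)
  refine ⟨p.getVert 0, p.getVert 1, p.getVert 2, p.getVert 3, p.adj_getVert_succ (by omega),
    p.adj_getVert_succ (by omega), p.adj_getVert_succ (by omega), ?_⟩
  rw [Walk.getVert_zero, ← length_eq_dist_of_subwalk hp (p.isSubwalk_take 3), Walk.take_length]
  omega

lemma IsTree.eq_of_adj_of_dist_lt (hG : G.IsTree) {u v x y : V} (hx : G.Adj v x)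
    (hy : G.Adj v y) (hxu : G.dist u x < G.dist u v) (hyu : G.dist u y < G.dist u v) : x = y := by
  classical
  obtain ⟨p, hp, -⟩ := hG.connected.exists_path_of_dist u v
  -- a closer neighbour `z` of `v` lies on the geodesic from `u` to `v`, hence is its penultimate vertex
  have mem_support (z : V) (hz : G.Adj v z) (hzu : G.dist u z < G.dist u v) : z ∈ p.support := by
    obtain ⟨q, hq, hql⟩ := hG.connected.exists_path_of_dist u z
    refine hG.isAcyclic.mem_support_of_ne_mem_support_of_adj_of_isPath hp hq hz fun hv ↦ ?_
    have := (dist_le (q.takeUntil v hv)).trans (q.length_takeUntil_le_length hv)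
    omega
  rw [hG.isAcyclic.eq_penultimate_of_adj_end hp hx (mem_support x hx hxu),
    hG.isAcyclic.eq_penultimate_of_adj_end hp hy (mem_support y hy hyu)]

lemma IsTree.three_le_dist_or_three_le_dist (hG : G.IsTree) {a b c d w : V} (hab : G.Adj a b)
    (hbc : G.Adj b c) (hcd : G.Adj c d) (had : G.dist a d = 3) (hwb : w ≠ b) (hwc : w ≠ c) :
    3 ≤ G.dist w a ∨ 3 ≤ G.dist w d := by
  -- along `a b c d` the distance to `w` moves by exactly one per step and has no interior peak
  have hac : a ≠ c := by rintro rfl; rw [dist_eq_one_iff_adj.mpr hcd] at had; omega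
  have hbd : b ≠ d := by rintro rfl; rw [dist_eq_one_iff_adj.mpr hab] at had; omega
  have no_peak_at_b : ¬(G.dist w a < G.dist w b ∧ G.dist w c < G.dist w b) := fun h ↦
    hac (hG.eq_of_adj_of_dist_lt hab.symm hbc h.1 h.2)
  have no_peak_at_c : ¬(G.dist w b < G.dist w c ∧ G.dist w d < G.dist w c) := fun h ↦
    hbd (hG.eq_of_adj_of_dist_lt hbc.symm hcd h.1 h.2)
  have := hG.dist_eq_dist_add_one_of_adj w hab
  have := hG.dist_eq_dist_add_one_of_adj w hbc
  have := hG.dist_eq_dist_add_one_of_adj w hcd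
  have := hG.connected.pos_dist_of_ne hwb
  have := hG.connected.pos_dist_of_ne hwc
  have : G.dist a d ≤ G.dist a w + G.dist w d := hG.connected.dist_triangle
  have : G.dist a w = G.dist w a := dist_comm
  omega

variable [Fintype V] [DecidableEq V]

lemma Connected.two_mul_card_add_card_far_le [DecidableRel G.Adj] (hG : G.Connected) (i : V) :
    2 * Fintype.card V + #{j | 3 ≤ G.dist i j} ≤ ∑ j, G.dist i j + G.degree i + 2 := by
  have pointwise (j : V) : 2 + (if 3 ≤ G.dist i j then 1 else 0) ≤
      G.dist i j + (if G.Adj i j then 1 else 0) + if i = j then 2 else 0 := by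
    by_cases hij : i = j
    · simp [hij]
    by_cases hadj : G.Adj i j
    · simp [hij, hadj, dist_eq_one_iff_adj.mpr hadj]
    have := hG.one_lt_dist_of_ne_of_not_adj hij hadj
    split_ifs <;> omega
  calc 2 * Fintype.card V + #{j | 3 ≤ G.dist i j}
      = ∑ j, (2 + if 3 ≤ G.dist i j then 1 else 0) := by
        rw [card_filter, sum_add_distrib, sum_const, card_univ, smul_eq_mul, mul_comm]
    _ ≤ ∑ j, (G.dist i j + (if G.Adj i j then 1 else 0) + if i = j then 2 else 0) :=
        sum_le_sum fun j _ ↦ pointwise j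
    _ = ∑ j, G.dist i j + G.degree i + 2 := by
        rw [sum_add_distrib, sum_add_distrib, ← card_filter, ← neighborFinset_eq_filter,
          card_neighborFinset_eq_degree, sum_ite_eq]
        simp

lemma IsTree.two_mul_card_le_sum_card_far (hG : G.IsTree) {a b c d : V} (hab : G.Adj a b)
    (hbc : G.Adj b c) (hcd : G.Adj c d) (had : G.dist a d = 3) :
    2 * Fintype.card V ≤ ∑ i, #{j | 3 ≤ G.dist i j} + 6 := by
  set far : V → Finset V := fun i ↦ {j | 3 ≤ G.dist i j}
  change _ ≤ ∑ i, #(far i) + 6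
  have hcover : Fintype.card V ≤ #(far a) + #(far d) + 2 := by
    calc Fintype.card V = #(univ : Finset V) := card_univ.symm
      _ ≤ #(far a ∪ far d ∪ {b, c}) := card_le_card fun w _ ↦ by
          by_cases hw : w = b ∨ w = c
          · rcases hw with rfl | rfl <;> simp
          push Not at hw
          simpa [far, dist_comm, hw.1, hw.2] using
            hG.three_le_dist_or_three_le_dist hab hbc hcd had hw.1 hw.2
      _ ≤ #(far a) + #(far d) + 2 :=
          (card_union_le _ _).trans (add_le_add (card_union_le _ _) card_le_two)
  have hrest : #({a, b, c, d}ᶜ : Finset V) ≤ ∑ i ∈ {a, b, c, d}ᶜ, #(far i) := by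
    rw [card_eq_sum_ones]
    refine sum_le_sum fun w hw ↦ card_pos.mpr ?_
    simp only [mem_compl, mem_insert, mem_singleton, not_or] at hw
    rcases hG.three_le_dist_or_three_le_dist hab hbc hcd had hw.2.1 hw.2.2.1 with h | h
    · exact ⟨a, by simpa [far] using h⟩
    · exact ⟨d, by simpa [far] using h⟩
  have hends : #(far a) + #(far d) ≤ ∑ i ∈ {a, b, c, d}, #(far i) := by
    have had' : a ≠ d := by rintro rfl; simp at had
    rw [← sum_pair (f := fun i ↦ #(far i)) had']
    exact sum_le_sum_of_subset (by intro; simp; tauto)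
  have := sum_compl_add_sum ({a, b, c, d} : Finset V) fun i ↦ #(far i)
  have := card_compl ({a, b, c, d} : Finset V)
  have : #({a, b, c, d} : Finset V) ≤ 4 := card_le_four
  omega

lemma IsTree.two_mul_card_sq_le_sum_dist (hG : G.IsTree) {a b c d : V} (hab : G.Adj a b)
    (hbc : G.Adj b c) (hcd : G.Adj c d) (had : G.dist a d = 3) :
    2 * Fintype.card V ^ 2 ≤ ∑ i, ∑ j, G.dist i j + 2 * Fintype.card V + 4 := by
  classical
  have rows := sum_le_sum fun i (_ : i ∈ univ) ↦ hG.connected.two_mul_card_add_card_far_le i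
  simp only [sum_add_distrib, sum_const, card_univ, smul_eq_mul] at rows
  have := G.sum_degrees_eq_twice_card_edges
  have := hG.card_edgeFinset
  have := hG.two_mul_card_le_sum_card_far hab hbc hcd had
  nlinarith

end SimpleGraph

lemma isHermitian_distMatrix {n : ℕ} (G : SimpleGraph (Fin n)) : (distMatrix G).IsHermitian := by
  ext i j
  simp [distMatrix, dist_comm]

lemma eigenvalues_distMatrix_le_distEig_one {n : ℕ} (G : SimpleGraph (Fin n)) (i : Fin n) :
    (isHermitian_distMatrix G).eigenvalues i ≤ distEig G 1 := by
  rw [distEig, distEigList, dif_pos (isHermitian_distMatrix G)]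
  refine (List.pairwise_insertionSort _ _).le_getD_zero ?_
  exact (List.perm_insertionSort _ _).mem_iff.mpr (List.mem_ofFn.mpr ⟨i, rfl⟩)

lemma dotProduct_distMatrix_mulVec_le {n : ℕ} (G : SimpleGraph (Fin n)) (x : Fin n → ℝ) :
    x ⬝ᵥ distMatrix G *ᵥ x ≤ distEig G 1 * (x ⬝ᵥ x) :=
  (isHermitian_distMatrix G).dotProduct_mulVec_le (eigenvalues_distMatrix_le_distEig_one G) x

lemma sum_dist_le_distEig_one_mul {n : ℕ} (G : SimpleGraph (Fin n)) :
    ∑ i, ∑ j, (G.dist i j : ℝ) ≤ distEig G 1 * n := by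
  simpa [dotProduct, mulVec, distMatrix] using dotProduct_distMatrix_mulVec_le G 1

lemma div_le_distEig_one_of_dist_eq_three {n : ℕ} {G : SimpleGraph (Fin n)} {a b c d : Fin n}
    (hab : G.Adj a b) (hbc : G.Adj b c) (hcd : G.Adj c d) (had : G.dist a d = 3) :
    67 / 13 ≤ distEig G 1 := by
  have hac : 2 ≤ G.dist a c := by have := hcd.diff_dist_adj (u := a); omega
  have hbd : 2 ≤ G.dist b d := by
    have := hab.diff_dist_adj (u := d)
    have := @dist_comm _ G d a
    have := @dist_comm _ G d b
    omega
  obtain ⟨hab', hac', had', hbc', hbd', hcd'⟩ :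
      a ≠ b ∧ a ≠ c ∧ a ≠ d ∧ b ≠ c ∧ b ≠ d ∧ c ≠ d := by
    refine ⟨hab.ne, ?_, ?_, hbc.ne, ?_, hcd.ne⟩ <;> rintro rfl <;> simp at hac hbd had
  set x : Fin n → ℝ := Pi.single a 3 + Pi.single b 2 + Pi.single c 2 + Pi.single d 3
  have hxx : x ⬝ᵥ x = 26 := by
    norm_num [x, dotProduct_add, hab', hac', had', hbc', hbd', hcd', hab'.symm, hac'.symm,
      had'.symm, hbc'.symm, hbd'.symm, hcd'.symm]
  have hDx : 134 ≤ x ⬝ᵥ distMatrix G *ᵥ x := by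
    simp only [x, mulVec_add, mulVec_single, MulOpposite.op_ofNat, dotProduct_add,
      dotProduct_smul, add_dotProduct, single_dotProduct, col_apply, distMatrix, dist_self,
      CharP.cast_eq_zero, mul_zero, zero_add, smul_add, MulOpposite.smul_eq_mul_unop,
      MulOpposite.unop_ofNat, add_zero]
    rw [@dist_comm _ G b a, @dist_comm _ G c a, @dist_comm _ G d a, @dist_comm _ G c b,
      @dist_comm _ G d b, @dist_comm _ G d c, dist_eq_one_iff_adj.mpr hab,
      dist_eq_one_iff_adj.mpr hbc, dist_eq_one_iff_adj.mpr hcd, had]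
    have hac' : (2 : ℝ) ≤ G.dist a c := by exact_mod_cast hac
    have hbd' : (2 : ℝ) ≤ G.dist b d := by exact_mod_cast hbd
    push_cast
    linarith
  have := dotProduct_distMatrix_mulVec_le G x
  rw [hxx] at this
  linarith

theorem largest_distance_eigenvalue_tree_lower_bound {n : ℕ}
    (T : SimpleGraph (Fin n)) (hT : T.IsTree) (hd : ∃ u v, 3 ≤ T.dist u v) :
    distEig T 1 ≥ 2 * (n : ℝ) - 2 - 4 / n ∧ distEig T 1 > 2 * (n : ℝ) - 3 := by
  obtain ⟨u, v, huv⟩ := hd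
  obtain ⟨a, b, c, d, hab, hbc, hcd, had⟩ := exists_adj_adj_adj_dist_eq_three huv
  have hn : (0 : ℝ) < n := by exact_mod_cast u.pos
  have hW : 2 * (n : ℝ) ^ 2 ≤ ∑ i, ∑ j, (T.dist i j : ℝ) + 2 * n + 4 := by
    exact_mod_cast Fintype.card_fin n ▸ hT.two_mul_card_sq_le_sum_dist hab hbc hcd had
  have hlower : 2 * (n : ℝ) - 2 - 4 / n ≤ distEig T 1 := by
    refine le_of_mul_le_mul_right ?_ hn
    have : (2 * n - 2 - 4 / n) * n = 2 * (n : ℝ) ^ 2 - 2 * n - 4 := by field_simp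
    linarith [sum_dist_le_distEig_one_mul T]
  refine ⟨hlower, ?_⟩
  rcases le_or_gt n 4 with hn4 | hn4
  · have : (n : ℝ) ≤ 4 := by exact_mod_cast hn4
    linarith [div_le_distEig_one_of_dist_eq_three hab hbc hcd had]
  · have : 4 / (n : ℝ) < 1 := (div_lt_one hn).mpr (by exact_mod_cast hn4)
    linarith
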